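/- For every LTL formula φ in negation normal form and every infinite word w over 2^Ap, there exist indices i, j ≥ 0 such that for every k ≥ 0 the suffix w_{i+k} is μ-stable with respect to φ and the suffix w_{j+k} is ν-stable with respect to φ. -/
import Mathlib


/-- LTL formulas in negation normal form over atomic propositions `Ap`. -/
inductive LTL (Ap : Type) : Type
  | tt : LTL Ap
  | ff : LTL Ap
  | atom (a : Ap) : LTL Ap
  | natom (a : Ap) : LTL Ap
  | conj (φ ψ : LTL Ap) : LTL Ap
  | disj (φ ψ : LTL Ap) : LTL Ap
  | next (φ : LTL Ap) : LTL Ap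
  | fut (φ : LTL Ap) : LTL Ap
  | glob (φ : LTL Ap) : LTL Ap
  | untl (φ ψ : LTL Ap) : LTL Ap
  | wUntl (φ ψ : LTL Ap) : LTL Ap
  | strongRel (φ ψ : LTL Ap) : LTL Ap
  | rel (φ ψ : LTL Ap) : LTL Ap

variable {Ap : Type} [DecidableEq Ap]

/-- The suffix `w_i` of an infinite word. -/
def suffix (w : ℕ → Finset Ap) (i : ℕ) : ℕ → Finset Ap := fun k => w (i + k)

/-- Standard LTL satisfaction over infinite words over `2^Ap`. -/
def Sat : (ℕ → Finset Ap) → LTL Ap → Prop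
  | _, .tt => True
  | _, .ff => False
  | w, .atom a => a ∈ w 0
  | w, .natom a => a ∉ w 0
  | w, .conj φ ψ => Sat w φ ∧ Sat w ψ
  | w, .disj φ ψ => Sat w φ ∨ Sat w ψ
  | w, .next φ => Sat (suffix w 1) φ
  | w, .fut φ => ∃ k, Sat (suffix w k) φ
  | w, .glob φ => ∀ k, Sat (suffix w k) φ
  | w, .untl φ ψ => ∃ k, Sat (suffix w k) ψ ∧ ∀ j < k, Sat (suffix w j) φ
  | w, .wUntl φ ψ =>
      (∀ k, Sat (suffix w k) φ) ∨ (∃ k, Sat (suffix w k) ψ ∧ ∀ j < k, Sat (suffix w j) φ)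
  | w, .strongRel φ ψ => ∃ k, Sat (suffix w k) φ ∧ ∀ j ≤ k, Sat (suffix w j) ψ
  | w, .rel φ ψ =>
      (∀ k, Sat (suffix w k) ψ) ∨ (∃ k, Sat (suffix w k) φ ∧ ∀ j ≤ k, Sat (suffix w j) ψ)

/-- The "after" function on a single letter `ν ∈ 2^Ap`. -/
def afLetter : LTL Ap → Finset Ap → LTL Ap
  | .tt, _ => .tt
  | .ff, _ => .ff
  | .atom a, ν => if a ∈ ν then .tt else .ff
  | .natom a, ν => if a ∈ ν then .ff else .tt
  | .conj φ ψ, ν => .conj (afLetter φ ν) (afLetter ψ ν)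
  | .disj φ ψ, ν => .disj (afLetter φ ν) (afLetter ψ ν)
  | .next φ, _ => φ
  | .fut φ, ν => .disj (afLetter φ ν) (.fut φ)
  | .glob φ, ν => .conj (afLetter φ ν) (.glob φ)
  | .untl φ ψ, ν => .disj (afLetter ψ ν) (.conj (afLetter φ ν) (.untl φ ψ))
  | .wUntl φ ψ, ν => .disj (afLetter ψ ν) (.conj (afLetter φ ν) (.wUntl φ ψ))
  | .strongRel φ ψ, ν => .conj (afLetter ψ ν) (.disj (afLetter φ ν) (.strongRel φ ψ))
  | .rel φ ψ, ν => .conj (afLetter ψ ν) (.disj (afLetter φ ν) (.rel φ ψ))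

/-- The "after" function extended to finite words. -/
def af : LTL Ap → List (Finset Ap) → LTL Ap
  | φ, [] => φ
  | φ, ν :: u => af (afLetter φ ν) u

/-- The finite prefix `w_{0i} = w[0]⋯w[i-1]` of an infinite word. -/
def prefixWord (w : ℕ → Finset Ap) (i : ℕ) : List (Finset Ap) :=
  (List.range i).map w

/-- The finite infix `w_{ij} = w[i]⋯w[j-1]` of an infinite word. -/
def infixWord (w : ℕ → Finset Ap) (i j : ℕ) : List (Finset Ap) :=
  (List.range (j - i)).map (fun k => w (i + k))

/-- Evaluation of a formula as a propositional formula, where every maximal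
proper subformula (root not `∧`/`∨`) is treated as a propositional variable
whose truth value is given by the assignment `v`. -/
def propEval (v : LTL Ap → Prop) : LTL Ap → Prop
  | .tt => True
  | .ff => False
  | .conj φ ψ => propEval v φ ∧ propEval v ψ
  | .disj φ ψ => propEval v φ ∨ propEval v ψ
  | φ => v φ

/-- Propositional equivalence `φ ≡_P ψ`. -/
def propEquiv (φ ψ : LTL Ap) : Prop := ∀ v, propEval v φ ↔ propEval v ψ

/-- The set of subformulas of a formula (including itself). -/
def subf : LTL Ap → Set (LTL Ap)
  | .tt => {LTL.tt}
  | .ff => {LTL.ff}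
  | .atom a => {LTL.atom a}
  | .natom a => {LTL.natom a}
  | .conj φ ψ => insert (.conj φ ψ) (subf φ ∪ subf ψ)
  | .disj φ ψ => insert (.disj φ ψ) (subf φ ∪ subf ψ)
  | .next φ => insert (.next φ) (subf φ)
  | .fut φ => insert (.fut φ) (subf φ)
  | .glob φ => insert (.glob φ) (subf φ)
  | .untl φ ψ => insert (.untl φ ψ) (subf φ ∪ subf ψ)
  | .wUntl φ ψ => insert (.wUntl φ ψ) (subf φ ∪ subf ψ)
  | .strongRel φ ψ => insert (.strongRel φ ψ) (subf φ ∪ subf ψ)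
  | .rel φ ψ => insert (.rel φ ψ) (subf φ ∪ subf ψ)

/-- A formula is proper if its root is not a conjunction or a disjunction. -/
def isProper : LTL Ap → Prop
  | .conj _ _ => False
  | .disj _ _ => False
  | _ => True

/-- The set of proper subformulas of `φ`. -/
def properSubf (φ : LTL Ap) : Set (LTL Ap) := {ψ | ψ ∈ subf φ ∧ isProper ψ}

/-- Formulas whose root is a least-fixed-point operator (`F`, `U`, `M`). -/
def isMu : LTL Ap → Prop
  | .fut _ => True
  | .untl _ _ => True
  | .strongRel _ _ => True
  | _ => False

/-- Formulas whose root is a greatest-fixed-point operator (`G`, `W`, `R`). -/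
def isNu : LTL Ap → Prop
  | .glob _ => True
  | .wUntl _ _ => True
  | .rel _ _ => True
  | _ => False

/-- `μ(φ)`: subformulas of `φ` of the form `Fψ`, `ψ₁Uψ₂`, `ψ₁Mψ₂`. -/
def muSet (φ : LTL Ap) : Set (LTL Ap) := {ψ | ψ ∈ subf φ ∧ isMu ψ}

/-- `ν(φ)`: subformulas of `φ` of the form `Gψ`, `ψ₁Wψ₂`, `ψ₁Rψ₂`. -/
def nuSet (φ : LTL Ap) : Set (LTL Ap) := {ψ | ψ ∈ subf φ ∧ isNu ψ}

/-- `GF_w = {ψ ∈ μ(φ) | w ⊨ GFψ}`. -/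
def GFSet (φ : LTL Ap) (w : ℕ → Finset Ap) : Set (LTL Ap) :=
  {ψ | ψ ∈ muSet φ ∧ Sat w (.glob (.fut ψ))}

/-- `F_w = {ψ ∈ μ(φ) | w ⊨ Fψ}`. -/
def FSet (φ : LTL Ap) (w : ℕ → Finset Ap) : Set (LTL Ap) :=
  {ψ | ψ ∈ muSet φ ∧ Sat w (.fut ψ)}

/-- `FG_w = {ψ ∈ ν(φ) | w ⊨ FGψ}`. -/
def FGSet (φ : LTL Ap) (w : ℕ → Finset Ap) : Set (LTL Ap) :=
  {ψ | ψ ∈ nuSet φ ∧ Sat w (.fut (.glob ψ))}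

/-- `G_w = {ψ ∈ ν(φ) | w ⊨ Gψ}`. -/
def GSet (φ : LTL Ap) (w : ℕ → Finset Ap) : Set (LTL Ap) :=
  {ψ | ψ ∈ nuSet φ ∧ Sat w (.glob ψ)}

open scoped Classical in
/-- `φ[X]_ν`. -/
noncomputable def evalNu (X : Set (LTL Ap)) : LTL Ap → LTL Ap
  | .tt => .tt
  | .ff => .ff
  | .atom a => .atom a
  | .natom a => .natom a
  | .conj φ ψ => .conj (evalNu X φ) (evalNu X ψ)
  | .disj φ ψ => .disj (evalNu X φ) (evalNu X ψ)
  | .next φ => .next (evalNu X φ)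
  | .glob φ => .glob (evalNu X φ)
  | .wUntl φ ψ => .wUntl (evalNu X φ) (evalNu X ψ)
  | .rel φ ψ => .rel (evalNu X φ) (evalNu X ψ)
  | .fut φ => if LTL.fut φ ∈ X then .tt else .ff
  | .untl φ ψ => if LTL.untl φ ψ ∈ X then .wUntl (evalNu X φ) (evalNu X ψ) else .ff
  | .strongRel φ ψ => if LTL.strongRel φ ψ ∈ X then .rel (evalNu X φ) (evalNu X ψ) else .ff

open scoped Classical in
/-- `φ[Y]_μ`. -/
noncomputable def evalMu (Y : Set (LTL Ap)) : LTL Ap → LTL Ap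
  | .tt => .tt
  | .ff => .ff
  | .atom a => .atom a
  | .natom a => .natom a
  | .conj φ ψ => .conj (evalMu Y φ) (evalMu Y ψ)
  | .disj φ ψ => .disj (evalMu Y φ) (evalMu Y ψ)
  | .next φ => .next (evalMu Y φ)
  | .fut φ => .fut (evalMu Y φ)
  | .untl φ ψ => .untl (evalMu Y φ) (evalMu Y ψ)
  | .strongRel φ ψ => .strongRel (evalMu Y φ) (evalMu Y ψ)
  | .glob φ => if LTL.glob φ ∈ Y then .tt else .ff
  | .wUntl φ ψ => if LTL.wUntl φ ψ ∈ Y then .tt else .untl (evalMu Y φ) (evalMu Y ψ)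
  | .rel φ ψ => if LTL.rel φ ψ ∈ Y then .tt else .strongRel (evalMu Y φ) (evalMu Y ψ)

/-- Concatenation `u·w` of a finite word and an infinite word. -/
def wordAppend (u : List (Finset Ap)) (w : ℕ → Finset Ap) : ℕ → Finset Ap :=
  fun i => if h : i < u.length then u.get ⟨i, h⟩ else w (i - u.length)

/-- The smallest set of formulas containing `tt`, `ff` and all elements of `S`
that is closed under conjunction and disjunction. -/
inductive PosBool (S : Set (LTL Ap)) : LTL Ap → Prop
  | tt : PosBool S .tt
  | ff : PosBool S .ff
  | base {ψ : LTL Ap} : ψ ∈ S → PosBool S ψ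
  | conj {φ ψ : LTL Ap} : PosBool S φ → PosBool S ψ → PosBool S (.conj φ ψ)
  | disj {φ ψ : LTL Ap} : PosBool S φ → PosBool S ψ → PosBool S (.disj φ ψ)

/-- `Reach(φ)`: the set of `≡_P`-equivalence classes of the formulas `af(φ,u)`
over all finite words `u`. -/
def Reach (φ : LTL Ap) : Set (Set (LTL Ap)) :=
  {C | ∃ u : List (Finset Ap), C = {ψ | propEquiv ψ (af φ u)}}

/-- The fragment `μLTL`: only `tt`, `ff`, literals, `∧`, `∨`, `X`, `F`, `U`, `M`. -/
def inMuLTL : LTL Ap → Prop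
  | .tt => True
  | .ff => True
  | .atom _ => True
  | .natom _ => True
  | .conj φ ψ => inMuLTL φ ∧ inMuLTL ψ
  | .disj φ ψ => inMuLTL φ ∧ inMuLTL ψ
  | .next φ => inMuLTL φ
  | .fut φ => inMuLTL φ
  | .untl φ ψ => inMuLTL φ ∧ inMuLTL ψ
  | .strongRel φ ψ => inMuLTL φ ∧ inMuLTL ψ
  | .glob _ => False
  | .wUntl _ _ => False
  | .rel _ _ => False

/-- The fragment `νLTL`: only `tt`, `ff`, literals, `∧`, `∨`, `X`, `G`, `W`, `R`. -/
def inNuLTL : LTL Ap → Prop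
  | .tt => True
  | .ff => True
  | .atom _ => True
  | .natom _ => True
  | .conj φ ψ => inNuLTL φ ∧ inNuLTL ψ
  | .disj φ ψ => inNuLTL φ ∧ inNuLTL ψ
  | .next φ => inNuLTL φ
  | .glob φ => inNuLTL φ
  | .wUntl φ ψ => inNuLTL φ ∧ inNuLTL ψ
  | .rel φ ψ => inNuLTL φ ∧ inNuLTL ψ
  | .fut _ => False
  | .untl _ _ => False
  | .strongRel _ _ => False

lemma suffix_zero' (w : ℕ → Finset Ap) : suffix w 0 = w :=
  funext fun n => by simp [suffix]

lemma suffix_add' (w : ℕ → Finset Ap) (i k : ℕ) :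
    suffix (suffix w i) k = suffix w (i + k) :=
  funext fun n => by simp [suffix, add_assoc]

lemma subf_finite' (φ : LTL Ap) : (subf φ).Finite := by
  induction φ <;> simp only [subf] <;>
    first
      | exact Set.finite_singleton _
      | (apply Set.Finite.insert; first | assumption | exact Set.Finite.union ‹_› ‹_›)

lemma satGF' (w : ℕ → Finset Ap) (n : ℕ) (ψ : LTL Ap) :
    Sat (suffix w n) (.glob (.fut ψ)) ↔ Sat w (.glob (.fut ψ)) := by
  simp only [Sat, suffix_add']
  constructor
  · intro h k
    obtain ⟨m, hm⟩ := h k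
    exact ⟨n + m, by rwa [show k + (n + m) = n + k + m by ring]⟩
  · intro h k
    obtain ⟨m, hm⟩ := h (n + k)
    exact ⟨m, hm⟩

lemma satFG' (w : ℕ → Finset Ap) (n : ℕ) (ψ : LTL Ap) :
    Sat (suffix w n) (.fut (.glob ψ)) ↔ Sat w (.fut (.glob ψ)) := by
  simp only [Sat, suffix_add']
  constructor
  · rintro ⟨k, hk⟩
    exact ⟨n + k, fun m => hk m⟩
  · rintro ⟨k, hk⟩
    exact ⟨k, fun m => by
      have := hk (n + m); rwa [show k + (n + m) = n + k + m by ring] at this⟩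

lemma notGF' (w : ℕ → Finset Ap) (ψ : LTL Ap) (h : ¬ Sat w (.glob (.fut ψ))) :
    ∃ N, ∀ m, N ≤ m → ¬ Sat (suffix w m) ψ := by
  simp only [Sat, suffix_add', not_forall, not_exists] at h
  obtain ⟨k, hk⟩ := h
  exact ⟨k, fun m hm hs => hk (m - k) (by rw [Nat.add_sub_cancel' hm]; exact hs)⟩

lemma yesFG' (w : ℕ → Finset Ap) (ψ : LTL Ap) (h : Sat w (.fut (.glob ψ))) :
    ∃ N, ∀ m, N ≤ m → Sat (suffix w m) ψ := by
  simp only [Sat, suffix_add'] at h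
  obtain ⟨k, hk⟩ := h
  exact ⟨k, fun m hm => by have := hk (m - k); rwa [Nat.add_sub_cancel' hm] at this⟩

/-- every word has indices `i, j` from which on all suffixes are
μ-stable resp. ν-stable with respect to `φ`. -/
theorem stmt9 {Ap : Type} [DecidableEq Ap] [Fintype Ap]
    (φ : LTL Ap) (w : ℕ → Finset Ap) :
    ∃ i j : ℕ, ∀ k : ℕ,
      GFSet φ (suffix w (i + k)) = FSet φ (suffix w (i + k)) ∧
      FGSet φ (suffix w (j + k)) = GSet φ (suffix w (j + k)) := by
  classical
  have hfin : (subf φ).Finite := subf_finite' φ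
  set S := hfin.toFinset with hS
  let Fb : LTL Ap → ℕ := fun ψ =>
    if h : ∃ N, ∀ m, N ≤ m → ¬ Sat (suffix w m) ψ then h.choose else 0
  let Gb : LTL Ap → ℕ := fun ψ =>
    if h : ∃ N, ∀ m, N ≤ m → Sat (suffix w m) ψ then h.choose else 0
  refine ⟨S.sup Fb, S.sup Gb, fun k => ⟨?_, ?_⟩⟩
  · ext ψ
    constructor
    · rintro ⟨hmu, hGF⟩
      refine ⟨hmu, ?_⟩
      have := hGF 0
      rwa [suffix_zero'] at this
    · rintro ⟨hmu, hF⟩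
      refine ⟨hmu, ?_⟩
      rw [satGF']
      by_contra hn
      obtain ⟨m, hm⟩ := hF
      rw [suffix_add'] at hm
      have hex : ∃ N, ∀ m, N ≤ m → ¬ Sat (suffix w m) ψ := notGF' w ψ hn
      have hFb : Fb ψ = hex.choose := dif_pos hex
      have hle : Fb ψ ≤ S.sup Fb :=
        Finset.le_sup (hfin.mem_toFinset.mpr hmu.1)
      exact hex.choose_spec (S.sup Fb + k + m)
        (by omega) hm
  · ext ψ
    constructor
    · rintro ⟨hnu, hFG⟩
      refine ⟨hnu, ?_⟩
      rw [satFG'] at hFG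
      have hex : ∃ N, ∀ m, N ≤ m → Sat (suffix w m) ψ := yesFG' w ψ hFG
      have hGb : Gb ψ = hex.choose := dif_pos hex
      have hle : Gb ψ ≤ S.sup Gb :=
        Finset.le_sup (hfin.mem_toFinset.mpr hnu.1)
      intro m
      rw [suffix_add']
      exact hex.choose_spec (S.sup Gb + k + m) (by omega)
    · rintro ⟨hnu, hG⟩
      exact ⟨hnu, 0, by rwa [suffix_zero']⟩
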